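/- Let n ≥ p ≥ 1, α = √2/2, β = 1 − √2/2, and let X ∈ ℝ^{n×p} satisfy XᵀX = I_p. For 1 ≤ u ≤ n, 1 ≤ v ≤ p set P_{uv}(X) = E_{uv} − α X E_{uv}ᵀ X − β X Xᵀ E_{uv}. Then for all indices 1 ≤ i,k ≤ n and 1 ≤ j,l ≤ p, ∑_{u=1}^{n} ∑_{v=1}^{p} (P_{uv}(X))_{ij} (P_{uv}(X))_{kl} = δ_{ik} δ_{jl} − X_{il} X_{kj}, where δ is the Kronecker delta. -/

import Mathlib

/-!
With `T F = X Fᵀ X` and `S F = X Xᵀ F`, the fields are the values `P_{uv} = P E_{uv}` of the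
linear operator `P = I - α T - β S`. This operator is self-adjoint for the Frobenius pairing, so
`(P_{uv})_{ij} = (P E_{ij})_{uv}` and the sum over `u, v` is the `(k, l)` entry of `P (P E_{ij})`.
When `Xᵀ X = 1` one has `T² = S² = S` and `T S = S T = T`, hence
`P² = I - 2α(1 - β) T - (2β - α² - β²) S`, and `α = √2/2`, `β = 1 - α` are exactly the
constants that make this `I - T`.
-/

open Matrix

/-- The projected field `P_{uv}(X) = E_{uv} - α X E_{uv}ᵀ X - β X Xᵀ E_{uv}` with
`α = √2/2`, `β = 1 - √2/2`. -/
noncomputable def projField {n p : ℕ} (X : Matrix (Fin n) (Fin p) ℝ)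
    (u : Fin n) (v : Fin p) : Matrix (Fin n) (Fin p) ℝ :=
  Matrix.single u v (1 : ℝ)
    - (Real.sqrt 2 / 2) • (X * (Matrix.single u v (1 : ℝ))ᵀ * X)
    - (1 - Real.sqrt 2 / 2) • (X * Xᵀ * Matrix.single u v (1 : ℝ))

namespace Matrix

variable {R m n : Type*} [CommRing R] [Fintype m] [Fintype n]

def projFieldOp (a b : R) (X : Matrix m n R) : Matrix m n R →ₗ[R] Matrix m n R where
  toFun F := F - a • (X * Fᵀ * X) - b • (X * Xᵀ * F)
  map_add' F G := by
    simp only [transpose_add, Matrix.mul_add, Matrix.add_mul, smul_add]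
    abel
  map_smul' c F := by
    simp only [transpose_smul, Matrix.mul_smul, Matrix.smul_mul, smul_sub, RingHom.id_apply,
      smul_comm c]

theorem projFieldOp_apply (a b : R) (X F : Matrix m n R) :
    projFieldOp a b X F = F - a • (X * Fᵀ * X) - b • (X * Xᵀ * F) := rfl

theorem projFieldOp_projFieldOp [DecidableEq n] {a b : R} (ha : 2 * a ^ 2 = 1) (hb : a + b = 1)
    {X : Matrix m n R} (hX : Xᵀ * X = 1) (F : Matrix m n R) :
    projFieldOp a b X (projFieldOp a b X F) = F - X * Fᵀ * X := by
  have cancel : ∀ Y : Matrix n n R, Xᵀ * (X * Y) = Y := fun Y => by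
    rw [← Matrix.mul_assoc, hX, Matrix.one_mul]
  simp only [projFieldOp_apply, transpose_sub, transpose_smul, transpose_mul, transpose_transpose,
    Matrix.mul_sub, Matrix.sub_mul, Matrix.mul_smul, Matrix.smul_mul, Matrix.mul_assoc, cancel, hX,
    Matrix.mul_one]
  set T := X * (Fᵀ * X)
  set S := X * (Xᵀ * F)
  linear_combination (norm := module) (2 * a * hb - ha) • T + (ha - (a - b + 1) * hb) • S

variable [DecidableEq m] [DecidableEq n]

theorem mul_transpose_single_mul_apply (X : Matrix m n R) (u i : m) (v j : n) :
    (X * (single u v (1 : R))ᵀ * X) i j = X i v * X u j := by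
  simp [mul_apply, single_apply, ite_and]

theorem projFieldOp_single_apply (a b : R) (X : Matrix m n R) (u i : m) (v j : n) :
    projFieldOp a b X (single u v 1) i j
      = single u v 1 i j - a * (X i v * X u j) - b * if v = j then (X * Xᵀ) i u else 0 := by
  rw [projFieldOp_apply, sub_apply, sub_apply, smul_apply, smul_apply, smul_eq_mul, smul_eq_mul,
    mul_transpose_single_mul_apply]
  by_cases h : v = j
  · subst h; simp
  · simp [h, mul_single_apply_of_ne, Ne.symm h]

theorem projFieldOp_single_apply_comm (a b : R) (X : Matrix m n R) (u i : m) (v j : n) :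
    projFieldOp a b X (single u v 1) i j = projFieldOp a b X (single i j 1) u v := by
  simp only [projFieldOp_single_apply, single_apply, eq_comm (a := i), eq_comm (a := j)]
  rw [← transpose_apply (X * Xᵀ), transpose_mul, transpose_transpose]
  ring

theorem sum_mul_projFieldOp_single_apply (a b : R) (X F : Matrix m n R) (i : m) (j : n) :
    ∑ u, ∑ v, F u v * projFieldOp a b X (single u v 1) i j = projFieldOp a b X F i j := by
  have expand : F = ∑ u, ∑ v, F u v • single u v (1 : R) := by
    simpa only [smul_single, smul_eq_mul, mul_one] using matrix_eq_sum_single F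
  conv_rhs => rw [expand]
  simp only [map_sum, map_smul, sum_apply, smul_apply, smul_eq_mul]

end Matrix

theorem projField_eq_projFieldOp {n p : ℕ} (X : Matrix (Fin n) (Fin p) ℝ) (u : Fin n)
    (v : Fin p) :
    projField X u v = projFieldOp (√2 / 2) (1 - √2 / 2) X (single u v 1) := rfl

theorem proj_field_covariance_general (n p : ℕ)
    (X : Matrix (Fin n) (Fin p) ℝ) (hX : Xᵀ * X = 1)
    (i k : Fin n) (j l : Fin p) :
    ∑ u : Fin n, ∑ v : Fin p, projField X u v i j * projField X u v k l
      = (if i = k then (1 : ℝ) else 0) * (if j = l then (1 : ℝ) else 0)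
        - X i l * X k j := by
  have hα : 2 * (√2 / 2) ^ 2 = 1 := by
    rw [div_pow, Real.sq_sqrt zero_le_two]
    norm_num
  have hαβ : √2 / 2 + (1 - √2 / 2) = 1 := by ring
  set P := projFieldOp (√2 / 2) (1 - √2 / 2) X
  calc ∑ u, ∑ v, projField X u v i j * projField X u v k l
      = ∑ u, ∑ v, P (single i j 1) u v * P (single u v 1) k l := by
        simp only [projField_eq_projFieldOp, projFieldOp_single_apply_comm _ _ X _ i _ j, P]
    _ = P (P (single i j 1)) k l := sum_mul_projFieldOp_single_apply _ _ X _ k l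
    _ = (single i j (1 : ℝ) - X * (single i j (1 : ℝ))ᵀ * X) k l := by
        rw [projFieldOp_projFieldOp hα hαβ hX]
    _ = _ := by
        rw [Matrix.sub_apply, mul_transpose_single_mul_apply, single_apply, ite_zero_mul_ite_zero,
          mul_one, mul_comm]

/-- the diffusion covariance of the projected fields:
`∑_{u,v} (P_{uv}(X))_{ij} (P_{uv}(X))_{kl} = δ_{ik} δ_{jl} - X_{il} X_{kj}`. -/
theorem proj_field_covariance (n p : ℕ) (hp : 1 ≤ p) (hpn : p ≤ n)
    (X : Matrix (Fin n) (Fin p) ℝ) (hX : Xᵀ * X = 1)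
    (i k : Fin n) (j l : Fin p) :
    ∑ u : Fin n, ∑ v : Fin p, projField X u v i j * projField X u v k l
      = (if i = k then (1 : ℝ) else 0) * (if j = l then (1 : ℝ) else 0)
        - X i l * X k j :=
  proj_field_covariance_general n p X hX i k j l
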